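/- arXiv:2508.02105 — 7 statements merged into one kernel-verified Lean document; each statement's English description precedes it below -/
import Mathlib

section
/- Let φ : X → Y be a spectral quotient map of spectral spaces with Y finite. Then φ is a topological quotient map. -/
/-!
A finite T0 space is Alexandrov-discrete and its points are locally closed, so a spectral map
into it has quasi-compact fibres and quasi-compact preimages of all subsets. Given `y ∈ C` with
`φ⁻¹ C` open, choose a quasi-compact open `K ⊆ φ⁻¹ C` meeting `φ⁻¹ y` whose image `T = φ K` is
maximal. Covering the quasi-compact set `φ⁻¹ T` by a quasi-compact open `K' ⊆ φ⁻¹ C` can only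
enlarge the image, so `φ K' = T` by maximality and hence `φ⁻¹ T = K'` is quasi-compact open.
The quotient property now makes `T` an open neighbourhood of `y` inside `C`.
-/

/-- A spectral space: quasi-compact, T0, sober, and the quasi-compact open subsets
form a basis closed under finite intersection. -/
def IsSpectralSpace (X : Type*) [TopologicalSpace X] : Prop :=
  CompactSpace X ∧ T0Space X ∧ QuasiSober X ∧
  TopologicalSpace.IsTopologicalBasis {U : Set X | IsOpen U ∧ IsCompact U} ∧
  ∀ U V : Set X, IsOpen U → IsCompact U → IsOpen V → IsCompact V → IsCompact (U ∩ V)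

/-- A spectral quotient map: a surjective spectral map such that any subset of the
target whose preimage is quasi-compact open is itself quasi-compact open. -/
def IsSpectralQuotientMap {X Y : Type*} [TopologicalSpace X] [TopologicalSpace Y]
    (φ : X → Y) : Prop :=
  Function.Surjective φ ∧ IsSpectralMap φ ∧
  ∀ C : Set Y, IsOpen (φ ⁻¹' C) → IsCompact (φ ⁻¹' C) → IsOpen C ∧ IsCompact C

open Set

theorem isLocallyClosed_singleton_of_alexandrovDiscrete {Y : Type*} [TopologicalSpace Y]
    [AlexandrovDiscrete Y] [T0Space Y] (y : Y) : IsLocallyClosed {y} := by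
  refine ⟨nhdsKer {y}, closure {y}, isOpen_nhdsKer, isClosed_closure, ?_⟩
  ext x
  simp only [mem_inter_iff, mem_nhdsKer_singleton, ← specializes_iff_mem_closure,
    mem_singleton_iff]
  exact ⟨by rintro rfl; exact ⟨specializes_rfl, specializes_rfl⟩,
    fun ⟨hxy, hyx⟩ ↦ (hxy.antisymm hyx).eq⟩

theorem IsSpectralMap.isCompact_preimage_of_finite {X Y : Type*} [TopologicalSpace X]
    [TopologicalSpace Y] [Finite Y] [T0Space Y] {f : X → Y} (hf : IsSpectralMap f)
    (s : Set Y) : IsCompact (f ⁻¹' s) := by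
  rw [← biUnion_of_singleton s, preimage_iUnion₂]
  refine s.toFinite.isCompact_biUnion fun y _ ↦ ?_
  obtain ⟨U, Z, hU, hZ, hUZ⟩ := isLocallyClosed_singleton_of_alexandrovDiscrete y
  rw [hUZ, preimage_inter]
  exact (hf.isCompact_preimage_of_isOpen hU U.toFinite.isCompact).inter_right
    (hZ.preimage hf.continuous)

namespace IsSpectralQuotientMap

variable {X Y : Type*} [TopologicalSpace X] [TopologicalSpace Y] [PrespectralSpace X]
  [Finite Y] [T0Space Y] {φ : X → Y}

theorem exists_isCompact_isOpen_preimage_image_eq (hq : IsSpectralQuotientMap φ) {C : Set Y}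
    (hC : IsOpen (φ ⁻¹' C)) {y : Y} (hy : y ∈ C) :
    ∃ K : Set X, IsCompact K ∧ IsOpen K ∧ K ⊆ φ ⁻¹' C ∧ y ∈ φ '' K ∧ φ ⁻¹' (φ '' K) = K := by
  obtain ⟨hsurj, hspec, -⟩ := hq
  have cover : ∀ T ⊆ C, ∃ K : Set X, IsCompact K ∧ IsOpen K ∧ φ ⁻¹' T ⊆ K ∧ K ⊆ φ ⁻¹' C :=
    fun T hT ↦ PrespectralSpace.exists_isCompact_and_isOpen_between
      (hspec.isCompact_preimage_of_finite T) hC (preimage_mono hT)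
  have subset_image {T : Set Y} {K : Set X} (hTK : φ ⁻¹' T ⊆ K) : T ⊆ φ '' K :=
    (image_preimage_eq T hsurj).symm.trans_subset (image_mono hTK)
  let 𝒦 : Set (Set X) := {K | IsCompact K ∧ IsOpen K ∧ K ⊆ φ ⁻¹' C ∧ y ∈ φ '' K}
  have h𝒦 : 𝒦.Nonempty := by
    obtain ⟨K, hKc, hKo, hyK, hKC⟩ := cover {y} (singleton_subset_iff.2 hy)
    exact ⟨K, hKc, hKo, hKC, subset_image hyK rfl⟩
  obtain ⟨K, ⟨hKc, hKo, hKC, hyK⟩, hmax⟩ :=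
    Finite.exists_maximalFor' (φ '' ·) 𝒦 (toFinite _) h𝒦
  obtain ⟨K', hK'c, hK'o, hKK', hK'C⟩ := cover (φ '' K) (image_subset_iff.2 hKC)
  have hKK'_image : φ '' K ⊆ φ '' K' := subset_image hKK'
  have himage : φ '' K' = φ '' K :=
    (hmax ⟨hK'c, hK'o, hK'C, hKK'_image hyK⟩ hKK'_image).antisymm hKK'_image
  have hpre : φ ⁻¹' (φ '' K) = K' :=
    hKK'.antisymm (himage ▸ subset_preimage_image φ K')
  exact ⟨K', hK'c, hK'o, hK'C, himage ▸ hyK, himage ▸ hpre⟩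

theorem isOpen_of_isOpen_preimage (hq : IsSpectralQuotientMap φ) {C : Set Y}
    (hC : IsOpen (φ ⁻¹' C)) : IsOpen C := by
  refine isOpen_iff_forall_mem_open.2 fun y hy ↦ ?_
  obtain ⟨K, hKc, hKo, hKC, hyK, hsat⟩ := hq.exists_isCompact_isOpen_preimage_image_eq hC hy
  exact ⟨φ '' K, image_subset_iff.2 hKC, (hq.2.2 _ (by rwa [hsat]) (by rwa [hsat])).1, hyK⟩

end IsSpectralQuotientMap

/-- A spectral quotient map with finite target is a topological quotient map. -/
theorem stmt_2 {X Y : Type*} [TopologicalSpace X] [TopologicalSpace Y]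
    (hX : IsSpectralSpace X) (hY : IsSpectralSpace Y) [Finite Y] (φ : X → Y)
    (hq : IsSpectralQuotientMap φ) :
    Topology.IsQuotientMap φ := by
  have : PrespectralSpace X := ⟨hX.2.2.2.1⟩
  have : T0Space Y := hY.2.1
  refine ⟨Topology.isCoinducing_iff.2 fun C ↦ ⟨hq.isOpen_of_isOpen_preimage, ?_⟩, hq.1⟩
  exact fun hC ↦ hC.preimage hq.2.1.continuous
end

section
/- Let φ : X → Y be a spectral quotient map and U ⊆ Y a quasi-compact open subset. Then the corestriction φ⁻¹(U) → U is a spectral quotient map (where φ⁻¹(U) and U carry the subspace topologies, which are spectral). -/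
lemma key_image {X Y : Type*} [TopologicalSpace X] [TopologicalSpace Y] (φ : X → Y)
    (U : Set Y) (V : Set U) :
    Subtype.val '' ((fun x : φ ⁻¹' U => (⟨φ x.1, x.2⟩ : U)) ⁻¹' V)
      = φ ⁻¹' (Subtype.val '' V) := by
  ext x
  constructor
  · rintro ⟨⟨a, ha⟩, hv, rfl⟩
    exact ⟨⟨φ a, ha⟩, hv, rfl⟩
  · rintro hx
    obtain ⟨⟨y, hy⟩, hv, h⟩ := hx
    have hxU : x ∈ φ ⁻¹' U := by simpa [← h] using hy
    refine ⟨⟨x, hxU⟩, ?_, rfl⟩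
    show (⟨φ x, hxU⟩ : U) ∈ V
    rwa [show (⟨φ x, hxU⟩ : U) = ⟨y, hy⟩ from Subtype.ext h.symm]

/-- The corestriction of a spectral quotient map to a quasi-compact open subset of the
target is a spectral quotient map (for the subspace topologies). -/
theorem stmt_4 {X Y : Type*} [TopologicalSpace X] [TopologicalSpace Y]
    (hX : IsSpectralSpace X) (hY : IsSpectralSpace Y) (φ : X → Y)
    (hq : IsSpectralQuotientMap φ)
    (U : Set Y) (hUopen : IsOpen U) (hUcpt : IsCompact U) :
    IsSpectralQuotientMap (fun x : φ ⁻¹' U => (⟨φ x.1, x.2⟩ : U)) := by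
  obtain ⟨hsurj, hspec, hquot⟩ := hq
  have hpre : IsOpen (φ ⁻¹' U) := hUopen.preimage hspec.continuous
  refine ⟨?_, ⟨?_, ?_⟩, ?_⟩
  · rintro ⟨y, hy⟩
    obtain ⟨x, rfl⟩ := hsurj y
    exact ⟨⟨x, hy⟩, rfl⟩
  · exact (hspec.continuous.comp continuous_subtype_val).subtype_mk _
  · intro s hsOpen hsCpt
    rw [Subtype.isCompact_iff, key_image]
    refine hspec.isCompact_preimage_of_isOpen ?_ ?_
    · exact hUopen.isOpenEmbedding_subtypeVal.isOpenMap _ hsOpen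
    · exact hsCpt.image continuous_subtype_val
  · intro C hCo hCc
    have himg : φ ⁻¹' (Subtype.val '' C)
        = Subtype.val '' ((fun x : φ ⁻¹' U => (⟨φ x.1, x.2⟩ : U)) ⁻¹' C) :=
      (key_image φ U C).symm
    have hDo : IsOpen (φ ⁻¹' (Subtype.val '' C)) := by
      rw [himg]; exact hpre.isOpenEmbedding_subtypeVal.isOpenMap _ hCo
    have hDc : IsCompact (φ ⁻¹' (Subtype.val '' C)) := by
      rw [himg]; exact hCc.image continuous_subtype_val
    obtain ⟨hDopen, hDcpt⟩ := hquot _ hDo hDc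
    have hCeq : C = Subtype.val ⁻¹' (Subtype.val '' C) :=
      (Set.preimage_image_eq C Subtype.val_injective).symm
    constructor
    · rw [hCeq]; exact hDopen.preimage continuous_subtype_val
    · rw [Subtype.isCompact_iff]; exact hDcpt
end

section
/- Let φ : X → Y be a spectral map of spectral spaces satisfying the weak lifting property: for every specialization y ⤳ y' in Y there exist points x₀, x₁, …, xₙ in X with φ(x₀) = y', φ(xₙ) = y, and such that for each i, the point xᵢ is a specialization of some point lying in the same fiber of φ as x_{i+1}. Then φ is a topological quotient map. -/
open Topology Filter Set

theorem IsSpectralSpace.spectralSpace {X : Type*} [TopologicalSpace X] (h : IsSpectralSpace X) :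
    SpectralSpace X :=
  have ⟨_, _, _, hbasis, hinter⟩ := h
  { toQuasiSeparatedSpace := ⟨hinter⟩
    toPrespectralSpace := .of_isTopologicalBasis hbasis fun _ hU ↦ hU.2 }

section ConstructibleTopology

variable {X : Type*} [TopologicalSpace X]

lemma constructibleTopology_le [PrespectralSpace X] :
    constructibleTopology X ≤ ‹TopologicalSpace X› :=
  (le_generateFrom fun _ hU ↦ hU.2.isOpen_constructibleTopology_of_isOpen hU.1).trans_eq
    PrespectralSpace.isTopologicalBasis.eq_generateFrom.symm

lemma IsCompact.isClosed_constructibleTopology_of_isOpen {s : Set X} (hs : IsCompact s)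
    (ho : IsOpen s) : IsClosed[constructibleTopology X] s :=
  @IsClosed.mk X (constructibleTopology X) s <|
    IsCompact.isOpen_constructibleTopology_of_isClosed (by rwa [compl_compl]) ho.isClosed_compl

lemma compactSpace_constructibleTopology [CompactSpace X] [QuasiSober X] [PrespectralSpace X]
    [QuasiSeparatedSpace X] : @CompactSpace X (constructibleTopology X) :=
  @Function.Surjective.compactSpace _ _ _ (constructibleTopology X) _
    (WithTopology.continuous_ofTopology _) _ (WithTopology.ofTopology_surjective _)

end ConstructibleTopology

section SpectralMap

variable {X Y : Type*} [TopologicalSpace X] [TopologicalSpace Y] {f : X → Y}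

theorem IsSpectralMap.exists_specializes_of_mem_closure_image [CompactSpace X] [QuasiSober X]
    [PrespectralSpace X] [QuasiSeparatedSpace X] [PrespectralSpace Y] (hf : IsSpectralMap f)
    {s : Set X} (hs : IsClosed s) {y : Y} (hy : y ∈ closure (f '' s)) : ∃ x ∈ s, f x ⤳ y := by
  let l := comap f (𝓝 y ⊓ 𝓟 (f '' s)) ⊓ 𝓟 s
  have : l.NeBot := comap_inf_principal_neBot_of_image_mem (mem_closure_iff_clusterPt.1 hy)
    (mem_inf_of_right (mem_principal_self _))
  obtain ⟨x, -, hx⟩ := @IsCompact.exists_clusterPt X (constructibleTopology X) univ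
    (@isCompact_univ X (constructibleTopology X) compactSpace_constructibleTopology) l _
    (le_principal_iff.2 univ_mem)
  have mem_of_isClosed {u : Set X} (hu : u ∈ l) (hc : IsClosed[constructibleTopology X] u) :
      x ∈ u :=
    (@isClosed_iff_clusterPt X (constructibleTopology X) u).1 hc x
      (@ClusterPt.mono _ (constructibleTopology X) _ _ _ hx (le_principal_iff.2 hu))
  refine ⟨x, mem_of_isClosed (mem_inf_of_right (mem_principal_self s))
    (hs.mono constructibleTopology_le), specializes_iff_forall_open.2 fun V hV hyV ↦ ?_⟩
  obtain ⟨U, ⟨hUo, hUc⟩, hyU, hUV⟩ :=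
    PrespectralSpace.isTopologicalBasis.exists_subset_of_mem_open hyV hV
  exact hUV <| mem_of_isClosed
    (mem_inf_of_left (preimage_mem_comap (mem_inf_of_left (hUo.mem_nhds hyU))))
    ((hf.isCompact_preimage_of_isOpen hUo hUc).isClosed_constructibleTopology_of_isOpen
      (hUo.preimage hf.continuous))

theorem IsSpectralMap.isClosed_image_of_stableUnderSpecialization [CompactSpace X] [QuasiSober X]
    [PrespectralSpace X] [QuasiSeparatedSpace X] [PrespectralSpace Y] (hf : IsSpectralMap f)
    {s : Set X} (hs : IsClosed s) (h : StableUnderSpecialization (f '' s)) :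
    IsClosed (f '' s) := by
  refine isClosed_of_closure_subset fun _ hy ↦ ?_
  obtain ⟨x, hx, hxy⟩ := hf.exists_specializes_of_mem_closure_image hs hy
  exact h hxy (mem_image_of_mem f hx)

def HasWeakLiftingProperty (f : X → Y) : Prop :=
  ∀ y y' : Y, y ⤳ y' → ∃ (n : ℕ) (x : Fin (n + 1) → X),
    f (x 0) = y' ∧ f (x (Fin.last n)) = y ∧
    ∀ i : Fin n, ∃ w : X, f w = f (x i.succ) ∧ w ⤳ x i.castSucc

namespace HasWeakLiftingProperty

theorem surjective (hf : HasWeakLiftingProperty f) : Function.Surjective f := fun y ↦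
  have ⟨_, x, hx, _⟩ := hf y y specializes_rfl
  ⟨x 0, hx⟩

theorem stableUnderSpecialization_of_preimage (hf : HasWeakLiftingProperty f) {s : Set Y}
    (hs : StableUnderSpecialization (f ⁻¹' s)) : StableUnderSpecialization s := by
  intro y y' hyy' hy
  obtain ⟨n, x, hx₀, hxₙ, hstep⟩ := hf y y' hyy'
  suffices ∀ i, f (x i) ∈ s from hx₀ ▸ this 0
  intro i
  induction i using Fin.reverseInduction with
  | last => rwa [hxₙ]
  | cast i ih =>
    obtain ⟨w, hw, hwx⟩ := hstep i
    exact hs hwx (show f w ∈ s from hw ▸ ih)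

theorem isQuotientMap [CompactSpace X] [QuasiSober X] [PrespectralSpace X]
    [QuasiSeparatedSpace X] [PrespectralSpace Y] (hlift : HasWeakLiftingProperty f)
    (hf : IsSpectralMap f) : IsQuotientMap f := by
  refine (isQuotientMap_iff f).2 ⟨.of_isOpen_preimage_iff_isOpen fun C ↦
    ⟨fun hC ↦ ?_, (·.preimage hf.continuous)⟩, hlift.surjective⟩
  have hF : IsClosed (f ⁻¹' Cᶜ) := hC.isClosed_compl
  have hFC : f '' (f ⁻¹' Cᶜ) = Cᶜ := hlift.surjective.image_preimage Cᶜ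
  rw [← isClosed_compl_iff, ← hFC]
  refine hf.isClosed_image_of_stableUnderSpecialization hF ?_
  rw [hFC]
  exact hlift.stableUnderSpecialization_of_preimage hF.stableUnderSpecialization

end HasWeakLiftingProperty

end SpectralMap

/-- A spectral map of spectral spaces satisfying the weak lifting property is a
topological quotient map. Here `y ⤳ y'` is expressed as `y' ∈ closure {y}`. -/
theorem stmt_5 {X Y : Type*} [TopologicalSpace X] [TopologicalSpace Y]
    (hX : IsSpectralSpace X) (hY : IsSpectralSpace Y) (φ : X → Y)
    (hspec : IsSpectralMap φ)
    (hlift : ∀ y y' : Y, y' ∈ closure {y} →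
      ∃ (n : ℕ) (x : Fin (n + 1) → X),
        φ (x 0) = y' ∧ φ (x (Fin.last n)) = y ∧
        ∀ i : Fin n, ∃ w : X, φ w = φ (x i.succ) ∧ x i.castSucc ∈ closure {w}) :
    Topology.IsQuotientMap φ := by
  have := hX.spectralSpace
  have := hY.spectralSpace
  refine HasWeakLiftingProperty.isQuotientMap (fun y y' h ↦ ?_) hspec
  simpa only [← specializes_iff_mem_closure] using hlift y y' h.mem_closure
end

section
/- Let X be a spectral space and let {S_i}_{i∈I} be a family of closed subsets of X with quasi-compact open complements (Thomason closed subsets), such that every finite intersection of the S_i is connected. Then the intersection ∩_{i∈I} S_i is connected. -/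
/-- Sandwich a compact set between an open set and a "nicely quasi-separated"
compact open set, using the basis of compact opens. -/
lemma aux_between {X : Type*} [TopologicalSpace X]
    (hbasis : TopologicalSpace.IsTopologicalBasis {U : Set X | IsOpen U ∧ IsCompact U})
    (hqs : ∀ U V : Set X, IsOpen U → IsCompact U → IsOpen V → IsCompact V → IsCompact (U ∩ V))
    {A U : Set X} (hA : IsCompact A) (hU : IsOpen U) (hAU : A ⊆ U) :
    ∃ U' : Set X, IsOpen U' ∧ IsCompact U' ∧ A ⊆ U' ∧ U' ⊆ U ∧
      ∀ V : Set X, IsOpen V → IsCompact V → IsCompact (U' ∩ V) := by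
  choose W hW hmem hsub using fun a : A => hbasis.exists_subset_of_mem_open (hAU a.2) hU
  obtain ⟨t, ht⟩ := hA.elim_finite_subcover W (fun a => (hW a).1)
    (fun x hx => Set.mem_iUnion.2 ⟨⟨x, hx⟩, hmem ⟨x, hx⟩⟩)
  refine ⟨⋃ a ∈ t, W a, isOpen_biUnion fun a _ => (hW a).1,
    t.finite_toSet.isCompact_biUnion (fun a _ => (hW a).2), ht,
    Set.iUnion₂_subset fun a _ => hsub a, fun V hVo hVc => ?_⟩
  rw [Set.iUnion₂_inter]
  exact t.finite_toSet.isCompact_biUnion fun a _ => hqs _ _ (hW a).1 (hW a).2 hVo hVc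

/-- If a family of Thomason closed subsets of a spectral space has all finite
(nonempty) intersections connected, then the whole intersection is connected. -/
theorem stmt_9 {X : Type*} [TopologicalSpace X] (hX : IsSpectralSpace X)
    {I : Type*} [Nonempty I] (S : I → Set X)
    (hclosed : ∀ i, IsClosed (S i))
    (hcompl : ∀ i, IsCompact (S i)ᶜ ∧ IsOpen (S i)ᶜ)
    (hfin : ∀ J : Finset I, J.Nonempty → IsConnected (⋂ j ∈ J, S j)) :
    IsConnected (⋂ i, S i) := by
  classical
  haveI : Nonempty {J : Finset I // J.Nonempty} :=
    ⟨⟨{Classical.arbitrary I}, Finset.singleton_nonempty _⟩⟩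
  obtain ⟨hcomp, -, -, hbasis, hqs⟩ := hX
  haveI : CompactSpace X := hcomp
  let T : {J : Finset I // J.Nonempty} → Set X := fun J => ⋂ j ∈ J.1, S j
  have hTclosed : ∀ J, IsClosed (T J) := fun J => isClosed_biInter fun j _ => hclosed j
  have hTcompact : ∀ J, IsCompact (T J) := fun J => (hTclosed J).isCompact
  have hTconn : ∀ J, IsConnected (T J) := fun J => hfin J.1 J.2
  have hdir : Directed (· ⊇ ·) T := by
    intro J K
    refine ⟨⟨J.1 ∪ K.1, J.2.mono Finset.subset_union_left⟩, ?_, ?_⟩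
    · exact fun x hx => Set.mem_iInter₂.2 fun j hj =>
        Set.mem_iInter₂.1 hx j (Finset.mem_union_left _ hj)
    · exact fun x hx => Set.mem_iInter₂.2 fun j hj =>
        Set.mem_iInter₂.1 hx j (Finset.mem_union_right _ hj)
  have hZeq : (⋂ i, S i) = ⋂ J, T J := by
    apply Set.Subset.antisymm
    · exact Set.subset_iInter fun J => Set.subset_iInter₂ fun j _ => Set.iInter_subset S j
    · intro x hx
      exact Set.mem_iInter.2 fun i =>
        Set.mem_iInter₂.1 (Set.mem_iInter.1 hx ⟨{i}, Finset.singleton_nonempty i⟩) i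
          (Finset.mem_singleton_self i)
  rw [hZeq]
  set Z := ⋂ J, T J with hZdef
  have hZsub : ∀ J, Z ⊆ T J := fun J => Set.iInter_subset T J
  have hZclosed : IsClosed Z := isClosed_iInter hTclosed
  have hne : Z.Nonempty :=
    IsCompact.nonempty_iInter_of_directed_nonempty_isCompact_isClosed T hdir
      (fun J => (hTconn J).nonempty) hTcompact hTclosed
  refine ⟨hne, ?_⟩
  rintro U V hU hV hZUV ⟨a, haZ, haU⟩ ⟨b, hbZ, hbV⟩
  by_contra hempty
  rw [Set.not_nonempty_iff_eq_empty] at hempty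
  have hdisj : ∀ x, x ∈ Z → x ∈ U → x ∈ V → False := fun x h1 h2 h3 =>
    Set.eq_empty_iff_forall_notMem.1 hempty x ⟨h1, h2, h3⟩
  have hAeq : Z ∩ U = Z ∩ Vᶜ := by
    ext x
    constructor
    · rintro ⟨hxZ, hxU⟩
      exact ⟨hxZ, fun hxV => hdisj x hxZ hxU hxV⟩
    · rintro ⟨hxZ, hxV⟩
      exact ⟨hxZ, (hZUV hxZ).resolve_right hxV⟩
  have hBeq : Z ∩ V = Z ∩ Uᶜ := by
    ext x
    constructor
    · rintro ⟨hxZ, hxV⟩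
      exact ⟨hxZ, fun hxU => hdisj x hxZ hxU hxV⟩
    · rintro ⟨hxZ, hxU⟩
      exact ⟨hxZ, (hZUV hxZ).resolve_left hxU⟩
  have hAcomp : IsCompact (Z ∩ U) :=
    (hAeq ▸ hZclosed.inter hV.isClosed_compl).isCompact
  have hBcomp : IsCompact (Z ∩ V) :=
    (hBeq ▸ hZclosed.inter hU.isClosed_compl).isCompact
  obtain ⟨U', hU'o, hU'c, hAU', hU'U, -⟩ :=
    aux_between hbasis hqs hAcomp hU Set.inter_subset_right
  obtain ⟨V', hV'o, hV'c, hBV', hV'V, hV'qs⟩ :=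
    aux_between hbasis hqs hBcomp hV Set.inter_subset_right
  have hKcomp : IsCompact (U' ∩ V') := Set.inter_comm V' U' ▸ hV'qs U' hU'o hU'c
  have h1 : (U' ∩ V') ∩ ⋂ J, T J = ∅ := by
    rw [Set.eq_empty_iff_forall_notMem]
    rintro x ⟨⟨hxU', hxV'⟩, hxZ⟩
    exact hdisj x hxZ (hU'U hxU') (hV'V hxV')
  obtain ⟨J2, hJ2⟩ := hKcomp.elim_directed_family_closed T hTclosed h1 hdir
  have hWcomp : IsCompact (U' ∪ V')ᶜ := ((hU'o.union hV'o).isClosed_compl).isCompact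
  have h2 : (U' ∪ V')ᶜ ∩ ⋂ J, T J = ∅ := by
    rw [Set.eq_empty_iff_forall_notMem]
    rintro x ⟨hxc, hxZ⟩
    rcases hZUV hxZ with hxU | hxV
    · exact hxc (Or.inl (hAU' ⟨hxZ, hxU⟩))
    · exact hxc (Or.inr (hBV' ⟨hxZ, hxV⟩))
  obtain ⟨J1, hJ1⟩ := hWcomp.elim_directed_family_closed T hTclosed h2 hdir
  obtain ⟨J, hJJ1, hJJ2⟩ := hdir J1 J2
  have hTsub : T J ⊆ U' ∪ V' := by
    intro x hx
    by_contra hxc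
    exact Set.eq_empty_iff_forall_notMem.1 hJ1 x ⟨hxc, hJJ1 hx⟩
  have := (hTconn J).isPreconnected U' V' hU'o hV'o hTsub
    ⟨a, hZsub J haZ, hAU' ⟨haZ, haU⟩⟩ ⟨b, hZsub J hbZ, hBV' ⟨hbZ, hbV⟩⟩
  obtain ⟨x, hxT, hxU', hxV'⟩ := this
  exact Set.eq_empty_iff_forall_notMem.1 hJ2 x ⟨⟨hxU', hxV'⟩, hJJ2 hxT⟩
end

section
/- Let (X_i, φ_{ij}) be a cofiltered diagram of spectral spaces with surjective spectral transition maps, and let X = lim X_i be the inverse limit. Then each projection map f_i : X → X_i is surjective. -/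
open TopologicalSpace Set

section PatchAux

variable {X Y : Type*} [TopologicalSpace X] [TopologicalSpace Y]

/-- Every ultrafilter on a spectral space "patch-converges": there is a point lying in exactly
the quasi-compact open sets belonging to the ultrafilter. -/
theorem exists_patch_point (h : IsSpectralSpace X) (F : Ultrafilter X) :
    ∃ x : X, ∀ U : Set X, IsOpen U → IsCompact U → (x ∈ U ↔ U ∈ F) := by
  classical
  obtain ⟨hcomp, ht0, hsober, hbasis, hinter⟩ := h
  haveI := hcomp
  let V : Set (Set X) := {V | IsOpen V ∧ IsCompact V ∧ V ∉ F}
  let Z₀ : Set X := ⋂ v : V, (v : Set X)ᶜ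
  have hZ₀closed : IsClosed Z₀ := isClosed_iInter fun v => v.2.1.isClosed_compl
  have hZ₀sub : ∀ W ∈ V, Z₀ ⊆ Wᶜ := fun W hW => iInter_subset _ (⟨W, hW⟩ : V)
  set S : Set (Set X) :=
    {Z | IsClosed Z ∧ Z ⊆ Z₀ ∧ ∀ U : Set X, IsOpen U → IsCompact U → U ∈ F → (Z ∩ U).Nonempty}
    with hS
  have hZ₀mem : Z₀ ∈ S := by
    refine ⟨hZ₀closed, subset_rfl, fun U hUo hUc hUF => ?_⟩
    have hfip : ∀ t : Finset V, (U ∩ ⋂ v ∈ t, (v : Set X)ᶜ).Nonempty := by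
      intro t
      have : U ∩ ⋂ v ∈ t, (v : Set X)ᶜ ∈ F := by
        refine Filter.inter_mem hUF ?_
        exact (Filter.biInter_finset_mem _).mpr fun v _ =>
          Ultrafilter.compl_mem_iff_notMem.mpr v.2.2.2
      exact Filter.nonempty_of_mem this
    have := hUc.inter_iInter_nonempty (fun v : V => (v : Set X)ᶜ)
      (fun v => v.2.1.isClosed_compl) hfip
    exact this.imp fun x hx => ⟨hx.2, hx.1⟩
  -- Zorn: find a minimal element of S
  have hchaincond : ∀ c ⊆ S, IsChain (· ⊆ ·) c → c.Nonempty →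
      ∃ lb ∈ S, ∀ s ∈ c, lb ⊆ s := by
    intro c hcS hchain hcne
    have key_least : ∀ t : Finset ↥c, ∃ Z ∈ c, ∀ W ∈ t, Z ⊆ (W : Set X) := by
      intro t
      induction t using Finset.induction with
      | empty =>
        obtain ⟨Z, hZ⟩ := hcne
        exact ⟨Z, hZ, by simp⟩
      | @insert W t hWt ih =>
        obtain ⟨Z, hZc, hZ⟩ := ih
        have htot : (W : Set X) ⊆ Z ∨ Z ⊆ (W : Set X) := by
          rcases eq_or_ne (W : Set X) Z with heq | hne
          · exact Or.inl heq.le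
          · exact hchain W.2 hZc hne
        rcases htot with hWZ | hZW
        · refine ⟨W, W.2, fun W' hW' => ?_⟩
          rcases Finset.mem_insert.mp hW' with rfl | hW't
          · exact subset_rfl
          · exact hWZ.trans (hZ W' hW't)
        · refine ⟨Z, hZc, fun W' hW' => ?_⟩
          rcases Finset.mem_insert.mp hW' with rfl | hW't
          · exact hZW
          · exact hZ W' hW't
    refine ⟨⋂₀ c, ⟨isClosed_sInter fun Z hZ => (hcS hZ).1, ?_, ?_⟩,
      fun s hs => sInter_subset_of_mem hs⟩
    · obtain ⟨Z, hZ⟩ := hcne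
      exact (sInter_subset_of_mem hZ).trans (hcS hZ).2.1
    · intro U hUo hUc hUF
      have hfip : ∀ t : Finset ↥c, (U ∩ ⋂ W ∈ t, (W : Set X)).Nonempty := by
        intro t
        obtain ⟨Z, hZc, hZle⟩ := key_least t
        obtain ⟨x, hxZ, hxU⟩ := (hcS hZc).2.2 U hUo hUc hUF
        exact ⟨x, hxU, mem_iInter₂.mpr fun W hW => hZle W hW hxZ⟩
      have := hUc.inter_iInter_nonempty (fun W : ↥c => (W : Set X))
        (fun W => (hcS W.2).1) hfip
      rw [sInter_eq_iInter]
      exact this.imp fun x hx => ⟨hx.2, hx.1⟩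
  obtain ⟨Z, -, hZmin⟩ := zorn_superset_nonempty S hchaincond Z₀ hZ₀mem
  have hZS : Z ∈ S := hZmin.prop
  have hZne : Z.Nonempty := by
    have := hZS.2.2 univ isOpen_univ isCompact_univ Filter.univ_mem
    simpa using this
  -- Z is irreducible
  have hirr : IsIrreducible Z := by
    refine ⟨hZne, fun u v hu hv hZu hZv => ?_⟩
    by_contra hemp
    have step : ∀ w : Set X, IsOpen w → (Z ∩ w).Nonempty →
        ∃ U : Set X, IsOpen U ∧ IsCompact U ∧ U ∈ F ∧ (Z ∩ wᶜ) ∩ U = ∅ := by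
      intro w hw hZw
      obtain ⟨x, hxZ, hxw⟩ := hZw
      by_contra hcon
      push_neg at hcon
      have hmem : Z ∩ wᶜ ∈ S :=
        ⟨hZS.1.inter hw.isClosed_compl, inter_subset_left.trans hZS.2.1,
          fun U hUo hUc hUF => hcon U hUo hUc hUF⟩
      have := hZmin.2 hmem inter_subset_left
      exact (this hxZ).2 hxw
    obtain ⟨U₁, hU₁o, hU₁c, hU₁F, hU₁⟩ := step u hu hZu
    obtain ⟨U₂, hU₂o, hU₂c, hU₂F, hU₂⟩ := step v hv hZv
    obtain ⟨x, hxZ, hxU₁, hxU₂⟩ := hZS.2.2 (U₁ ∩ U₂) (hU₁o.inter hU₂o)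
      (hinter _ _ hU₁o hU₁c hU₂o hU₂c) (Filter.inter_mem hU₁F hU₂F)
    have hxu : x ∈ u := by
      by_contra hx
      exact absurd hU₁ (nonempty_iff_ne_empty.mp ⟨x, ⟨hxZ, hx⟩, hxU₁⟩)
    have hxv : x ∈ v := by
      by_contra hx
      exact absurd hU₂ (nonempty_iff_ne_empty.mp ⟨x, ⟨hxZ, hx⟩, hxU₂⟩)
    exact hemp ⟨x, hxZ, hxu, hxv⟩
  obtain ⟨x, hx⟩ := hsober.sober hirr hZS.1
  refine ⟨x, fun U hUo hUc => ⟨fun hxU => ?_, fun hUF => ?_⟩⟩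
  · by_contra hUF
    have hxZ : x ∈ Z := hx.mem
    exact hZ₀sub U ⟨hUo, hUc, hUF⟩ (hZS.2.1 hxZ) hxU
  · obtain ⟨w, hwZ, hwU⟩ := hZS.2.2 U hUo hUc hUF
    have hwcl : w ∈ closure ({x} : Set X) := hx.symm ▸ hwZ
    obtain ⟨z, hzU, hzx⟩ := mem_closure_iff.mp hwcl U hUo hwU
    rwa [show z = x from hzx] at hzU

/-- Type synonym carrying the patch (constructible) topology. -/
structure Patched (X : Type u) : Type u where
  toPatch ::
  ofPatch : X

open Patched

/-- The subbasis of the patch topology: quasi-compact opens and their complements. -/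
def patchSub (X : Type*) [TopologicalSpace X] : Set (Set (Patched X)) :=
  {S | ∃ U : Set X, IsOpen U ∧ IsCompact U ∧ (S = ofPatch ⁻¹' U ∨ S = ofPatch ⁻¹' Uᶜ)}

instance Patched.instTop : TopologicalSpace (Patched X) :=
  TopologicalSpace.generateFrom (patchSub X)

theorem isOpen_patched_of_qc {U : Set X} (h1 : IsOpen U) (h2 : IsCompact U) :
    IsOpen (ofPatch ⁻¹' U : Set (Patched X)) :=
  isOpen_generateFrom_of_mem ⟨U, h1, h2, Or.inl rfl⟩

theorem isOpen_patched_compl {U : Set X} (h1 : IsOpen U) (h2 : IsCompact U) :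
    IsOpen (ofPatch ⁻¹' Uᶜ : Set (Patched X)) :=
  isOpen_generateFrom_of_mem ⟨U, h1, h2, Or.inr rfl⟩

theorem patched_compactSpace (h : IsSpectralSpace X) : CompactSpace (Patched X) := by
  refine ⟨isCompact_iff_ultrafilter_le_nhds.mpr fun F _ => ?_⟩
  obtain ⟨x, hx⟩ := exists_patch_point h (F.map ofPatch)
  refine ⟨toPatch x, mem_univ _, ?_⟩
  have hnhds : @nhds (Patched X) _ (toPatch x) =
      ⨅ s ∈ {s : Set (Patched X) | toPatch x ∈ s ∧ s ∈ patchSub X}, Filter.principal s :=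
    nhds_generateFrom
  rw [hnhds]
  refine le_iInf₂ fun s hs => Filter.le_principal_iff.mpr ?_
  obtain ⟨hxs, U, hUo, hUc, hcase⟩ := hs
  rcases hcase with rfl | rfl
  · have hUF : U ∈ F.map ofPatch := (hx U hUo hUc).mp hxs
    exact (Ultrafilter.mem_map).mp hUF
  · have hUF : U ∉ F.map ofPatch := fun hUF => hxs ((hx U hUo hUc).mpr hUF)
    have : Uᶜ ∈ F.map ofPatch := Ultrafilter.compl_mem_iff_notMem.mpr hUF
    exact (Ultrafilter.mem_map).mp this

theorem patched_t2 (h : IsSpectralSpace X) : T2Space (Patched X) := by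
  obtain ⟨hcomp, ht0, hsober, hbasis, hinter⟩ := h
  haveI := ht0
  refine ⟨fun x y hxy => ?_⟩
  have hxy' : ofPatch x ≠ ofPatch y := fun h => hxy (congrArg toPatch h)
  obtain ⟨W, hW, hxor⟩ := exists_isOpen_xor'_mem hxy'
  rcases hxor with ⟨hxW, hyW⟩ | ⟨hyW, hxW⟩
  · obtain ⟨U, ⟨hUo, hUc⟩, hxU, hUW⟩ := hbasis.exists_subset_of_mem_open hxW hW
    exact ⟨ofPatch ⁻¹' U, ofPatch ⁻¹' Uᶜ, isOpen_patched_of_qc hUo hUc,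
      isOpen_patched_compl hUo hUc, hxU, fun hyU => hyW (hUW hyU),
      disjoint_compl_right.preimage _⟩
  · obtain ⟨U, ⟨hUo, hUc⟩, hyU, hUW⟩ := hbasis.exists_subset_of_mem_open hyW hW
    exact ⟨ofPatch ⁻¹' Uᶜ, ofPatch ⁻¹' U, isOpen_patched_compl hUo hUc,
      isOpen_patched_of_qc hUo hUc, fun hxU => hxW (hUW hxU), hyU,
      (disjoint_compl_right.symm).preimage _⟩

theorem patched_continuous {φ : X → Y} (hφ : IsSpectralMap φ) :
    Continuous (fun x : Patched X => (toPatch (φ (ofPatch x)) : Patched Y)) := by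
  apply continuous_generateFrom_iff.mpr
  rintro s ⟨U, hUo, hUc, hcase⟩
  rcases hcase with rfl | rfl
  · exact isOpen_patched_of_qc (hUo.preimage hφ.continuous)
      (hφ.isCompact_preimage_of_isOpen hUo hUc)
  · exact isOpen_patched_compl (hUo.preimage hφ.continuous)
      (hφ.isCompact_preimage_of_isOpen hUo hUc)

end PatchAux

open Patched


open CategoryTheory

/-- In a cofiltered diagram of spectral spaces with surjective spectral transition
maps, each projection from the inverse limit is surjective. -/
theorem stmt_10 {J : Type*} [Category J] [IsCofiltered J]
    (X : J → Type*) [∀ i, TopologicalSpace (X i)]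
    (hspec : ∀ i, IsSpectralSpace (X i))
    (φ : ∀ {i j : J}, (i ⟶ j) → X i → X j)
    (hφ : ∀ {i j : J} (f : i ⟶ j), IsSpectralMap (φ f))
    (hid : ∀ (i : J) (x : X i), φ (𝟙 i) x = x)
    (hcomp : ∀ {i j k : J} (f : i ⟶ j) (g : j ⟶ k) (x : X i),
      φ (f ≫ g) x = φ g (φ f x))
    (hsurj : ∀ {i j : J} (f : i ⟶ j), Function.Surjective (φ f)) :
    ∀ i : J, Function.Surjective
      (fun x : {x : ∀ j, X j // ∀ {j k : J} (f : j ⟶ k), φ f (x j) = x k} => x.1 i) := by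
  classical
  intro i y
  have hne : ∀ j, Nonempty (X j) := by
    intro j
    obtain ⟨z, -⟩ := hsurj (IsCofiltered.minToRight j i) y
    exact ⟨φ (IsCofiltered.minToLeft j i) z⟩
  haveI := hne
  haveI : ∀ j, CompactSpace (Patched (X j)) := fun j => patched_compactSpace (hspec j)
  haveI : ∀ j, T2Space (Patched (X j)) := fun j => patched_t2 (hspec j)
  haveI : ∀ j, Nonempty (Patched (X j)) := fun j => ⟨toPatch (Classical.arbitrary (X j))⟩
  let A := Σ' (j k : J), j ⟶ k
  let S : Finset A → Set (∀ j, Patched (X j)) := fun H =>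
    {u | u i = toPatch y} ∩
      ⋂ a ∈ H, {u | toPatch (φ a.2.2 (ofPatch (u a.1))) = u a.2.1}
  have hclosed : ∀ H, IsClosed (S H) := by
    intro H
    refine IsClosed.inter (isClosed_eq (continuous_apply i) continuous_const) ?_
    refine isClosed_biInter fun a _ => ?_
    exact isClosed_eq ((patched_continuous (hφ a.2.2)).comp (continuous_apply a.1))
      (continuous_apply a.2.1)
  have hmono : ∀ {H₁ H₂ : Finset A}, H₁ ⊆ H₂ → S H₂ ⊆ S H₁ := by
    intro H₁ H₂ hsub u hu
    exact ⟨hu.1, mem_iInter₂.mpr fun a ha => mem_iInter₂.mp hu.2 a (hsub ha)⟩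
  have hdir : Directed (· ⊇ ·) S := fun H₁ H₂ =>
    ⟨H₁ ∪ H₂, hmono Finset.subset_union_left, hmono Finset.subset_union_right⟩
  have hSne : ∀ H, (S H).Nonempty := by
    intro H
    let O : Finset J := insert i ((H.image fun a => a.1) ∪ (H.image fun a => a.2.1))
    have hiO : i ∈ O := Finset.mem_insert_self _ _
    have hdom : ∀ a ∈ H, a.1 ∈ O := fun a ha =>
      Finset.mem_insert_of_mem (Finset.mem_union_left _ (Finset.mem_image_of_mem _ ha))
    have hcod : ∀ a ∈ H, a.2.1 ∈ O := fun a ha =>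
      Finset.mem_insert_of_mem (Finset.mem_union_right _ (Finset.mem_image_of_mem _ ha))
    let H' : Finset (Σ' (Xo Yo : J) (_ : Xo ∈ O) (_ : Yo ∈ O), Xo ⟶ Yo) :=
      H.attach.image fun a => ⟨a.1.1, a.1.2.1, hdom a.1 a.2, hcod a.1 a.2, a.1.2.2⟩
    obtain ⟨Sc, T, w⟩ := IsCofiltered.inf_exists O H'
    obtain ⟨z, hz⟩ := hsurj (T hiO) y
    refine ⟨fun j => if hj : j ∈ O then toPatch (φ (T hj) z) else Classical.arbitrary _, ?_, ?_⟩
    · show (if hj : i ∈ O then toPatch (φ (T hj) z) else Classical.arbitrary _) = toPatch y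
      rw [dif_pos hiO]
      exact congrArg toPatch hz
    · refine mem_iInter₂.mpr fun a ha => ?_
      show toPatch (φ a.2.2 (ofPatch (if hj : a.1 ∈ O then toPatch (φ (T hj) z)
          else Classical.arbitrary _))) =
        (if hj : a.2.1 ∈ O then toPatch (φ (T hj) z) else Classical.arbitrary _)
      rw [dif_pos (hdom a ha), dif_pos (hcod a ha)]
      have hmf : (⟨a.1, a.2.1, hdom a ha, hcod a ha, a.2.2⟩ :
          Σ' (Xo Yo : J) (_ : Xo ∈ O) (_ : Yo ∈ O), Xo ⟶ Yo) ∈ H' :=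
        Finset.mem_image.mpr ⟨⟨a, ha⟩, Finset.mem_attach _ _, rfl⟩
      have hw := w (hdom a ha) (hcod a ha) hmf
      show toPatch (φ a.2.2 (φ (T (hdom a ha)) z)) = toPatch (φ (T (hcod a ha)) z)
      rw [← hcomp, hw]
  obtain ⟨u, hu⟩ := IsCompact.nonempty_iInter_of_directed_nonempty_isCompact_isClosed S hdir
    hSne (fun H => (hclosed H).isCompact) hclosed
  have hu' : ∀ H, u ∈ S H := fun H => mem_iInter.mp hu H
  refine ⟨⟨fun j => ofPatch (u j), ?_⟩, ?_⟩
  · intro j k f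
    have := mem_iInter₂.mp (hu' {⟨j, k, f⟩}).2 ⟨j, k, f⟩ (Finset.mem_singleton_self _)
    exact congrArg ofPatch this
  · exact congrArg ofPatch (hu' ∅).1
end

section
/- Let R be a ring object (a monoid object) in a symmetric monoidal category C. If the underlying object of R is invertible with respect to the tensor product, then the unit map u : 𝟙 → R is an isomorphism. -/
/-!
If `M ⊗ N ≅ 𝟙`, the braiding also gives `N ⊗ M ≅ 𝟙`, so `M ⊗ -` is an equivalence and in
particular fully faithful. Pulling the multiplication `M ⊗ M ⟶ M ≅ M ⊗ 𝟙` back along `M ⊗ -`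
yields `t : M ⟶ 𝟙` with `M ◁ t = μ ≫ ρ⁻¹`. The right unit law gives `M ◁ (η ≫ t) = 𝟙`, hence
`η ≫ t = 𝟙`; the interchange law for `η ▷ M` and `M ◁ t` together with the left unit law gives
`t ≫ η = 𝟙`.
-/

open CategoryTheory MonoidalCategory

namespace CategoryTheory.MonoidalCategory

variable {C : Type*} [Category C] [MonoidalCategory C]

def tensorLeftEquiv {X Y : C} (e : X ⊗ Y ≅ 𝟙_ C) (e' : Y ⊗ X ≅ 𝟙_ C) : C ≌ C :=
  Equivalence.mk (tensorLeft X) (tensorLeft Y)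
    ((leftUnitorNatIso C).symm ≪≫ ((curriedTensor C).mapIso e').symm ≪≫ tensorLeftTensor Y X)
    ((tensorLeftTensor X Y).symm ≪≫ (curriedTensor C).mapIso e ≪≫ leftUnitorNatIso C)

end CategoryTheory.MonoidalCategory

namespace CategoryTheory.MonObj

variable {C : Type*} [Category C] [MonoidalCategory C]

theorem isIso_one_of_fullyFaithful_tensorLeft {M : C} [MonObj M]
    (h : (tensorLeft M).FullyFaithful) : IsIso η[M] := by
  obtain ⟨t, ht⟩ : ∃ t : M ⟶ 𝟙_ C, M ◁ t = μ ≫ (ρ_ M).inv :=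
    ⟨h.preimage (μ ≫ (ρ_ M).inv), h.map_preimage _⟩
  refine ⟨t, h.map_injective ?_, ?_⟩
  · simp [ht]
  · refine (cancel_epi (λ_ M).hom).1 ?_
    simpa [ht, unitors_inv_equal] using whisker_exchange η[M] t =≫ (ρ_ M).hom

theorem isIso_one_of_tensor_iso_unit [BraidedCategory C] {M N : C} [MonObj M]
    (e : M ⊗ N ≅ 𝟙_ C) : IsIso η[M] :=
  isIso_one_of_fullyFaithful_tensorLeft (tensorLeftEquiv e (β_ N M ≪≫ e)).fullyFaithfulFunctor

end CategoryTheory.MonObj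

/-- If the underlying object of a monoid object `R` in a symmetric monoidal category is
invertible (i.e. admits a tensor-inverse), then the unit map `𝟙 → R` is an isomorphism. -/
theorem stmt_11 {C : Type*} [Category C] [MonoidalCategory C] [SymmetricCategory C]
    (R : Mon C) (hinv : ∃ R' : C, Nonempty (R.X ⊗ R' ≅ 𝟙_ C)) :
    IsIso (MonObj.one : 𝟙_ C ⟶ R.X) := by
  obtain ⟨R', ⟨e⟩⟩ := hinv
  exact MonObj.isIso_one_of_tensor_iso_unit e
end

section
/- Let g : X → Y be a spectral map of spectral spaces and f : Y → X a function with g ∘ f = id_Y, such that: (i) f preserves specializations; and (ii) for every x ∈ X, x specializes to f(g(x)). Then g is a closed map (and hence a closed quotient map), f is a topological embedding, and g(Z) = f⁻¹(Z) for every specialization-closed subset Z ⊆ X. -/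
open Set Topology

section

variable {X Y : Type*} [TopologicalSpace X]

lemma IsSpectralSpace.spectralSpace_s15 (hX : IsSpectralSpace X) : SpectralSpace X :=
  have ⟨_, _, _, hbasis, hinter⟩ := hX
  { toPrespectralSpace := ⟨hbasis⟩
    toQuasiSeparatedSpace := ⟨hinter⟩ }

section ConstructibleTopology

lemma continuous_ofTopology_constructibleTopology [PrespectralSpace X] :
    Continuous (WithTopology.ofTopology : WithConstructibleTopology X → X) :=
  PrespectralSpace.isTopologicalBasis.continuous_iff.2 fun _ ⟨hUo, hUc⟩ =>
    hUc.isOpen_constructibleTopology_of_isOpen hUo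

lemma IsCompact.isClosed_constructibleTopology_of_isOpen_s15 {U : Set X} (hUc : IsCompact U)
    (hUo : IsOpen U) :
    IsClosed (WithTopology.ofTopology ⁻¹' U : Set (WithConstructibleTopology X)) := by
  refine isOpen_compl_iff.1 (WithConstructibleTopology.isOpen_iff.2 ?_)
  exact IsCompact.isOpen_constructibleTopology_of_isClosed (s := Uᶜ) (by rwa [compl_compl])
    hUo.isClosed_compl

theorem IsClosed.inter_iInter_nonempty_of_isCompact_isOpen [CompactSpace X] [QuasiSober X]
    [PrespectralSpace X] [QuasiSeparatedSpace X] {Z : Set X} (hZ : IsClosed Z) {ι : Type*}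
    {U : ι → Set X} (hUc : ∀ i, IsCompact (U i)) (hUo : ∀ i, IsOpen (U i))
    (h : ∀ t : Finset ι, (Z ∩ ⋂ i ∈ t, U i).Nonempty) : (Z ∩ ⋂ i, U i).Nonempty := by
  let e : WithConstructibleTopology X → X := WithTopology.ofTopology
  have he : Function.Surjective e := WithTopology.ofTopology_surjective _
  have key := (hZ.preimage continuous_ofTopology_constructibleTopology).isCompact
    |>.inter_iInter_nonempty (fun i => e ⁻¹' U i)
      (fun i => (hUc i).isClosed_constructibleTopology_of_isOpen_s15 (hUo i))
      fun t => by simpa only [preimage_inter, preimage_iInter₂] using (h t).preimage he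
  obtain ⟨x, hxZ, hxU⟩ := key
  exact ⟨e x, hxZ, by simpa only [mem_iInter, mem_preimage] using hxU⟩

end ConstructibleTopology

lemma PrespectralSpace.exists_isCompact_isOpen_of_not_specializes [TopologicalSpace Y]
    [PrespectralSpace Y] {y y' : Y} (h : ¬ y ⤳ y') : ∃ V : Set Y, IsCompact V ∧ IsOpen V ∧ y' ∈ V ∧ y ∉ V := by
  obtain ⟨W, hWo, hy'W, hyW⟩ := not_specializes_iff_exists_open.1 h
  obtain ⟨V, ⟨hVo, hVc⟩, hy'V, hVW⟩ :=
    PrespectralSpace.isTopologicalBasis.exists_subset_of_mem_open hy'W hWo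
  exact ⟨V, hVc, hVo, hy'V, fun hyV => hyW (hVW hyV)⟩

section SpectralMap

variable [CompactSpace X] [QuasiSober X] [PrespectralSpace X] [QuasiSeparatedSpace X]
  [TopologicalSpace Y] [PrespectralSpace Y] {g : X → Y}

theorem IsSpectralMap.isClosed_image_of_stableUnderSpecialization_s15 (hg : IsSpectralMap g)
    {Z : Set X} (hZ : IsClosed Z) (hspec : StableUnderSpecialization (g '' Z)) :
    IsClosed (g '' Z) := by
  refine isOpen_compl_iff.1 (isOpen_iff_forall_mem_open.2 fun y' hy' => ?_)
  have hsep (s : g '' Z) : ∃ V : Set Y, IsCompact V ∧ IsOpen V ∧ y' ∈ V ∧ (s : Y) ∉ V :=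
    PrespectralSpace.exists_isCompact_isOpen_of_not_specializes fun h => hy' (hspec h s.2)
  choose V hVc hVo hy'V hsV using hsep
  have hempty : ¬ (Z ∩ ⋂ s, g ⁻¹' V s).Nonempty := by
    rintro ⟨x, hxZ, hxV⟩
    exact hsV ⟨g x, x, hxZ, rfl⟩ (mem_iInter.1 hxV ⟨g x, x, hxZ, rfl⟩)
  obtain ⟨t, ht⟩ : ∃ t : Finset (g '' Z), ¬ (Z ∩ ⋂ s ∈ t, g ⁻¹' V s).Nonempty := by
    by_contra! hall
    exact hempty (hZ.inter_iInter_nonempty_of_isCompact_isOpen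
      (fun s => hg.isCompact_preimage_of_isOpen (hVo s) (hVc s))
      (fun s => (hVo s).preimage hg.continuous) hall)
  refine ⟨⋂ s ∈ t, V s, ?_, isOpen_biInter_finset fun s _ => hVo s,
    mem_iInter₂.2 fun s _ => hy'V s⟩
  rintro _ hV ⟨x, hxZ, rfl⟩
  exact ht ⟨x, hxZ, mem_iInter₂.2 fun s hs => mem_iInter₂.1 hV s hs⟩

theorem IsSpectralMap.isClosedMap_of_specializingMap (hg : IsSpectralMap g)
    (hsp : SpecializingMap g) : IsClosedMap g := fun _ hZ =>
  hg.isClosed_image_of_stableUnderSpecialization_s15 hZ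
    (hsp.stableUnderSpecialization_image hZ.stableUnderSpecialization)

end SpectralMap

section LeftInverse

variable {g : X → Y} {f : Y → X}

lemma image_eq_preimage_of_leftInverse (hgf : Function.LeftInverse g f)
    (hfg : ∀ x, x ⤳ f (g x)) {Z : Set X} (hZ : StableUnderSpecialization Z) :
    g '' Z = f ⁻¹' Z := by
  refine Subset.antisymm ?_ fun y hy => ⟨f y, hy, hgf y⟩
  rintro _ ⟨x, hx, rfl⟩
  exact hZ (hfg x) hx

variable [TopologicalSpace Y]

lemma specializingMap_of_leftInverse (hgf : Function.LeftInverse g f)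
    (hf : ∀ y y', y ⤳ y' → f y ⤳ f y') (hfg : ∀ x, x ⤳ f (g x)) : SpecializingMap g :=
  fun x _ h => ⟨f _, (hfg x).trans (hf _ _ h), hgf _⟩

lemma continuous_of_leftInverse (hgf : Function.LeftInverse g f) (hfg : ∀ x, x ⤳ f (g x))
    (hg : IsClosedMap g) : Continuous f :=
  continuous_iff_isClosed.2 fun Z hZ =>
    image_eq_preimage_of_leftInverse hgf hfg hZ.stableUnderSpecialization ▸ hg Z hZ

end LeftInverse

end

/-- Given a spectral map `g` with a specialization-preserving section `f` such that
every point specializes to `f (g x)`, the map `g` is a closed (quotient) map, `f` is a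
topological embedding, and `g(Z) = f⁻¹(Z)` for every specialization-closed `Z`. -/
theorem stmt_15 {X Y : Type*} [TopologicalSpace X] [TopologicalSpace Y]
    (hX : IsSpectralSpace X) (hY : IsSpectralSpace Y)
    (g : X → Y) (hg : IsSpectralMap g) (f : Y → X)
    (hgf : ∀ y : Y, g (f y) = y)
    (hfspec : ∀ y y' : Y, y' ∈ closure {y} → f y' ∈ closure {f y})
    (hxspec : ∀ x : X, f (g x) ∈ closure {x}) :
    IsClosedMap g ∧ Topology.IsQuotientMap g ∧ Topology.IsEmbedding f ∧
      ∀ Z : Set X, (∀ x ∈ Z, closure {x} ⊆ Z) → g '' Z = f ⁻¹' Z := by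
  replace hgf : Function.LeftInverse g f := hgf
  have := hX.spectralSpace_s15
  have := hY.spectralSpace_s15
  have hf (y y' : Y) (h : y ⤳ y') : f y ⤳ f y' :=
    specializes_iff_mem_closure.2 (hfspec y y' (specializes_iff_mem_closure.1 h))
  have hfg (x : X) : x ⤳ f (g x) := specializes_iff_mem_closure.2 (hxspec x)
  have hclosed : IsClosedMap g :=
    hg.isClosedMap_of_specializingMap (specializingMap_of_leftInverse hgf hf hfg)
  refine ⟨hclosed, hclosed.isQuotientMap hg.continuous hgf.surjective,
    hgf.isEmbedding hg.continuous (continuous_of_leftInverse hgf hfg hclosed),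
    fun Z hZ => image_eq_preimage_of_leftInverse hgf hfg fun x _ h hx => ?_⟩
  exact hZ x hx (specializes_iff_mem_closure.1 h)
end
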